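/- arXiv:2410.11098 — 2 statements merged into one kernel-verified Lean document; each statement's English description precedes it below -/
import Mathlib

section
/- Let A be a periodic abelian group and p a prime with A_p ≠ 0. Then the projection e_p is the unique element x ∈ End A satisfying all of: (1) x is a nonzero central idempotent; (2) x is not a sum of two nonzero orthogonal central idempotents; (3) there is no y ∈ End A with y ∘ (p·x) = x. -/
def pComponent (A : Type*) [AddCommGroup A] (p : ℕ) : AddSubgroup A where
  carrier := {a | ∃ n : ℕ, p ^ n • a = 0}
  zero_mem' := ⟨0, smul_zero _⟩
  add_mem' := by
    rintro a b ⟨n, hn⟩ ⟨m, hm⟩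
    refine ⟨n + m, ?_⟩
    have ha : p ^ (n + m) • a = 0 := by
      rw [pow_add, mul_comm, mul_smul, hn, smul_zero]
    have hb : p ^ (n + m) • b = 0 := by
      rw [pow_add, mul_smul, hm, smul_zero]
    rw [smul_add, ha, hb, add_zero]
  neg_mem' := by
    rintro a ⟨n, hn⟩
    exact ⟨n, by rw [smul_neg, hn, neg_zero]⟩


variable {p : ℕ}

lemma exists_order_p {M : Type*} [AddCommGroup M] (m : M) (hm : m ≠ 0)
    (ht : ∃ k : ℕ, p ^ k • m = 0) : ∃ m₀ : M, m₀ ≠ 0 ∧ p • m₀ = 0 := by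
  classical
  obtain ⟨k, hk⟩ := ht
  have hex : ∃ k : ℕ, p ^ k • m = 0 := ⟨k, hk⟩
  have hjspec : p ^ (Nat.find hex) • m = 0 := Nat.find_spec hex
  have hjne : Nat.find hex ≠ 0 := by
    intro h
    rw [h] at hjspec
    simp at hjspec
    exact hm hjspec
  refine ⟨p ^ (Nat.find hex - 1) • m, ?_, ?_⟩
  · intro h
    exact Nat.find_min hex (Nat.sub_lt (Nat.pos_of_ne_zero hjne) one_pos) h
  · rw [← mul_smul, ← pow_succ']
    have : Nat.find hex - 1 + 1 = Nat.find hex := Nat.succ_pred_eq_of_pos (Nat.pos_of_ne_zero hjne)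
    rw [this]
    exact hjspec

lemma embed_zmod (hp : p.Prime) {M : Type*} [AddCommGroup M] (m₀ : M) (h0 : m₀ ≠ 0)
    (hpm : p • m₀ = 0) : ∃ f : ZMod p →+ M, f 1 = m₀ ∧ Function.Injective f := by
  have hord : addOrderOf m₀ = p := by
    have hdvd : addOrderOf m₀ ∣ p := addOrderOf_dvd_of_nsmul_eq_zero hpm
    rcases (Nat.Prime.eq_one_or_self_of_dvd hp _ hdvd) with h | h
    · exact absurd (AddMonoid.addOrderOf_eq_one_iff.mp h) h0
    · exact h
  have hzp : (zmultiplesHom M m₀) (p : ℤ) = 0 := by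
    simp [zmultiplesHom_apply, natCast_zsmul, hpm]
  refine ⟨ZMod.lift p ⟨zmultiplesHom M m₀, hzp⟩, ?_, ?_⟩
  · have : ((1 : ℤ) : ZMod p) = 1 := by push_cast; ring
    rw [← this, ZMod.lift_coe]
    simp [zmultiplesHom_apply]
  · rw [ZMod.lift_injective]
    intro m hm
    simp only [zmultiplesHom_apply] at hm
    have : (addOrderOf m₀ : ℤ) ∣ m := addOrderOf_dvd_iff_zsmul_eq_zero.mpr hm
    rw [hord] at this
    exact (ZMod.intCast_zmod_eq_zero_iff_dvd m p).mpr this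

/-- Bezout over ℤ from coprimality of naturals. -/
lemma bezout_of_coprime {a b : ℕ} (h : Nat.Coprime a b) :
    ∃ u v : ℤ, u * a + v * b = 1 := by
  have : IsCoprime (a : ℤ) (b : ℤ) := Int.isCoprime_iff_gcd_eq_one.mpr (by
    rwa [Int.gcd_natCast_natCast])
  obtain ⟨u, v, huv⟩ := this
  exact ⟨u, v, huv⟩

/-- In a `p`-torsion group that is `p`-divisible, every nonzero integer divides. -/
lemma surj_zsmul_of_pdiv {N : Type*} [AddCommGroup N]
    (hp : p.Prime) (hNt : ∀ n : N, ∃ k : ℕ, p ^ k • n = 0)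
    (hdiv : ∀ c : N, ∃ c', p • c' = c) :
    ∀ z : ℤ, z ≠ 0 → ∀ c : N, ∃ c', z • c' = c := by
  have hnat : ∀ (nn : ℕ), nn ≠ 0 → ∀ c : N, ∃ c', nn • c' = c := by
    intro nn
    induction nn using Nat.strong_induction_on with
    | _ nn IH =>
      intro hnn c
      by_cases hpd : p ∣ nn
      · obtain ⟨nn', rfl⟩ := hpd
        have hnn' : nn' ≠ 0 := by rintro rfl; simp at hnn
        obtain ⟨c₁, hc₁⟩ := hdiv c
        obtain ⟨c₂, hc₂⟩ := IH nn' (by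
          have : 1 < p := hp.one_lt
          calc nn' < p * nn' := by nlinarith [Nat.pos_of_ne_zero hnn']
          ) hnn' c₁
        exact ⟨c₂, by rw [mul_smul, hc₂, hc₁]⟩
      · obtain ⟨k, hk⟩ := hNt c
        have hcop : Nat.Coprime nn (p ^ k) :=
          Nat.Coprime.pow_right _ ((hp.coprime_iff_not_dvd.mpr hpd).symm)
        obtain ⟨u, v, huv⟩ := bezout_of_coprime hcop
        refine ⟨u • c, ?_⟩
        have : (nn : ℤ) • (u • c) = ((nn * u : ℤ)) • c := by rw [← mul_smul]
        rw [← natCast_zsmul, this]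
        have h1 : (nn * u : ℤ) = 1 - v * (p ^ k : ℕ) := by push_cast at huv ⊢; linarith
        rw [h1, sub_smul, one_smul, mul_smul, natCast_zsmul, hk, smul_zero, sub_zero]
  intro z hz c
  rcases Int.natAbs_eq z with h | h
  · obtain ⟨c', hc'⟩ := hnat z.natAbs (Int.natAbs_ne_zero.mpr hz) c
    exact ⟨c', by rw [h, natCast_zsmul, hc']⟩
  · obtain ⟨c', hc'⟩ := hnat z.natAbs (Int.natAbs_ne_zero.mpr hz) c
    exact ⟨-c', by rw [h, neg_smul, smul_neg, neg_neg, natCast_zsmul, hc']⟩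

/-- A nonzero vector admits a linear functional with value 1. -/
lemma exists_functional (K V : Type*) [Field K] [AddCommGroup V] [Module K V]
    (v : V) (hv : v ≠ 0) : ∃ φ : V →ₗ[K] K, φ v = 1 := by
  obtain ⟨W, hW⟩ := Submodule.exists_isCompl (Submodule.span K {v})
  set proj := Submodule.linearProjOfIsCompl _ _ hW
  set iso := LinearEquiv.toSpanNonzeroSingleton K V v hv
  refine ⟨iso.symm.toLinearMap.comp proj, ?_⟩
  have hproj : proj v = ⟨v, Submodule.mem_span_singleton_self v⟩ :=
    Submodule.linearProjOfIsCompl_apply_left hW ⟨v, Submodule.mem_span_singleton_self v⟩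
  have hiso : iso.symm ⟨v, Submodule.mem_span_singleton_self v⟩ = 1 := by
    have := LinearEquiv.toSpanNonzeroSingleton_one K V v hv
    rw [← this, LinearEquiv.symm_apply_apply]
  simp only [LinearMap.comp_apply, hproj, LinearEquiv.coe_coe, hiso]

/-- Between two nonzero `p`-torsion abelian groups there is a nonzero hom one way or the other. -/
lemma homkey (hp : p.Prime) {M N : Type*} [AddCommGroup M] [AddCommGroup N]
    (hM : ∃ m : M, m ≠ 0) (hN : ∃ n : N, n ≠ 0)
    (hMt : ∀ m : M, ∃ k : ℕ, p ^ k • m = 0) (hNt : ∀ n : N, ∃ k : ℕ, p ^ k • n = 0) :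
    (∃ ψ : M →+ N, ψ ≠ 0) ∨ (∃ ψ : N →+ M, ψ ≠ 0) := by
  classical
  obtain ⟨m, hm⟩ := hM
  obtain ⟨m₀, hm₀, hpm₀⟩ := exists_order_p m hm (hMt m)
  obtain ⟨n, hn⟩ := hN
  obtain ⟨n₀, hn₀, hpn₀⟩ := exists_order_p n hn (hNt n)
  by_cases hdiv : ∀ c : N, ∃ c', p • c' = c
  · -- `N` is divisible: extend along `ZMod p ↪ M`.
    left
    have hsurj := surj_zsmul_of_pdiv hp hNt hdiv
    letI : DivisibleBy N ℤ :=
      { div := fun a z => if h : z = 0 then 0 else (hsurj z h a).choose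
        div_zero := fun a => by simp
        div_cancel := fun {z} a hz => by
          simpa [hz] using (hsurj z hz a).choose_spec }
    have baer : Module.Baer ℤ N := Module.Baer.of_divisible N
    obtain ⟨f, hf1, hfinj⟩ := embed_zmod hp m₀ hm₀ hpm₀
    obtain ⟨g, hg1, -⟩ := embed_zmod hp n₀ hn₀ hpn₀
    obtain ⟨h, hh⟩ := baer.extension_property_addMonoidHom f hfinj g
    refine ⟨h, fun h0 => hn₀ ?_⟩
    have h1 : h (f 1) = g 1 := by rw [← AddMonoidHom.comp_apply, hh]
    rw [hf1, hg1] at h1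
    rw [← h1, h0]
    rfl
  · -- `N` is not `p`-divisible: use a functional on `N / pN`.
    right
    push_neg at hdiv
    obtain ⟨n₁, hn₁⟩ := hdiv
    haveI : Fact p.Prime := ⟨hp⟩
    set S : AddSubgroup N := (AddMonoidHom.mk' (fun x : N => p • x)
      (fun a b => smul_add p a b)).range with hS
    have hpV : ∀ v : N ⧸ S, p • v = 0 := by
      intro v
      induction v using QuotientAddGroup.induction_on with
      | _ nn =>
        rw [← QuotientAddGroup.mk_nsmul]
        rw [QuotientAddGroup.eq_zero_iff]
        exact ⟨nn, rfl⟩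
    haveI : NeZero p := ⟨hp.ne_zero⟩
    letI mod : Module (ZMod p) (N ⧸ S) := AddCommMonoid.zmodModule hpV
    have hv₁ : (QuotientAddGroup.mk n₁ : N ⧸ S) ≠ 0 := by
      rw [Ne, QuotientAddGroup.eq_zero_iff]
      rintro ⟨n', hn'⟩
      exact hn₁ n' hn'
    obtain ⟨φ, hφ⟩ := @exists_functional (ZMod p) (N ⧸ S) _ _ mod (QuotientAddGroup.mk n₁) hv₁
    obtain ⟨g, hg1, -⟩ := embed_zmod hp m₀ hm₀ hpm₀
    refine ⟨g.comp ((@LinearMap.toAddMonoidHom _ _ _ _ _ _ _ _ mod _ _ φ).comp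
      (QuotientAddGroup.mk' S)), fun h0 => hm₀ ?_⟩
    have : g.comp ((@LinearMap.toAddMonoidHom _ _ _ _ _ _ _ _ mod _ _ φ).comp
        (QuotientAddGroup.mk' S)) n₁ = m₀ := by
      simp only [AddMonoidHom.comp_apply, LinearMap.toAddMonoidHom_coe,
        QuotientAddGroup.mk'_apply]
      rw [hφ, hg1]
    rw [← this, h0]
    rfl

section Part2

variable {A : Type*} [AddCommGroup A] {p : ℕ}

lemma mem_pComponent {a : A} : a ∈ pComponent A p ↔ ∃ n : ℕ, p ^ n • a = 0 := Iff.rfl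

lemma bezout_of_coprime' {a b : ℕ} (h : Nat.Coprime a b) :
    ∃ u v : ℤ, u * a + v * b = 1 := by
  have : IsCoprime (a : ℤ) (b : ℤ) := Int.isCoprime_iff_gcd_eq_one.mpr (by
    rwa [Int.gcd_natCast_natCast])
  obtain ⟨u, v, huv⟩ := this
  exact ⟨u, v, huv⟩

lemma nsmul_zsmul_mix (s t : ℕ) (w : ℤ) (a : A) (h : (s * t : ℕ) • a = 0) :
    s • (w * t) • a = 0 := by
  rw [← natCast_zsmul, ← mul_smul,
    show (s : ℤ) * (w * t) = w * ((s * t : ℕ) : ℤ) by push_cast; ring,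
    mul_smul, natCast_zsmul, h, smul_zero]

lemma split_bezout {u v : ℤ} {s t : ℕ} (h : u * s + v * t = 1) (a : A) :
    a = (v * t) • a + (u * s) • a := by
  rw [← add_smul, show (v * t + u * s : ℤ) = 1 by linarith, one_smul]

/-- Decomposition of an element into its `p`-part and a `p`-coprime part. -/
lemma decomp (hA : AddMonoid.IsTorsion A) (hp : p.Prime) (a : A) :
    ∃ b c : A, a = b + c ∧ b ∈ pComponent A p ∧
      ∃ m : ℕ, m ≠ 0 ∧ Nat.Coprime p m ∧ m • c = 0 := by
  have hn : addOrderOf a • a = 0 := addOrderOf_nsmul_eq_zero a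
  have npos : 0 < addOrderOf a := (hA a).addOrderOf_pos
  set n := addOrderOf a
  set k := n.factorization p with hk
  set m := n / p ^ k with hm
  have hnn : p ^ k * m = n := Nat.ordProj_mul_ordCompl_eq_self n p
  have hmd : ¬ p ∣ m := Nat.not_dvd_ordCompl hp npos.ne'
  have hcop : Nat.Coprime (p ^ k) m := Nat.Coprime.pow_left _ (hp.coprime_iff_not_dvd.mpr hmd)
  obtain ⟨u, v, huv⟩ := bezout_of_coprime' hcop
  refine ⟨(v * m) • a, (u * ((p ^ k : ℕ) : ℤ)) • a, split_bezout huv a, ⟨k, ?_⟩, m, ?_, ?_, ?_⟩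
  · exact nsmul_zsmul_mix _ _ _ _ (by rw [hnn]; exact hn)
  · exact (Nat.ordCompl_pos p npos.ne').ne'
  · exact hp.coprime_iff_not_dvd.mpr hmd
  · exact nsmul_zsmul_mix _ _ _ _ (by rw [mul_comm, hnn]; exact hn)

variable (e : AddMonoid.End A)

/-- `e` kills every element of order coprime to `p`. -/
lemma e_kills (hp : p.Prime)
    (he2 : ∀ q : ℕ, q.Prime → q ≠ p → ∀ a ∈ pComponent A q, e a = 0) :
    ∀ m : ℕ, Nat.Coprime p m → ∀ a : A, m • a = 0 → e a = 0 := by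
  intro m
  induction m using Nat.strong_induction_on with
  | _ m IH =>
    intro hcop a ha
    rcases eq_or_ne m 1 with rfl | hm1
    · rw [one_smul] at ha
      rw [ha, map_zero]
    have hm0 : m ≠ 0 := by
      rintro rfl
      rw [Nat.coprime_zero_right] at hcop
      exact hp.one_lt.ne' hcop
    set q := m.minFac with hq
    have hqp : q.Prime := Nat.minFac_prime hm1
    have hqd : q ∣ m := Nat.minFac_dvd m
    have hqnep : q ≠ p := by
      rintro rfl
      exact hqp.ne_one (Nat.dvd_one.mp (hcop ▸ Nat.dvd_gcd dvd_rfl hqd))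
    set k := m.factorization q with hk
    set m' := m / q ^ k with hm'
    have hmm' : q ^ k * m' = m := Nat.ordProj_mul_ordCompl_eq_self m q
    have hm'd : ¬ q ∣ m' := Nat.not_dvd_ordCompl hqp hm0
    have hcop2 : Nat.Coprime (q ^ k) m' :=
      Nat.Coprime.pow_left _ (hqp.coprime_iff_not_dvd.mpr hm'd)
    obtain ⟨u, v, huv⟩ := bezout_of_coprime' hcop2
    have hkpos : 0 < k := hqp.factorization_pos_of_dvd hm0 hqd
    have hlt : m' < m := by
      apply Nat.div_lt_self (Nat.pos_of_ne_zero hm0)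
      exact Nat.one_lt_pow hkpos.ne' hqp.one_lt
    have ha1 : e ((v * m') • a) = 0 := by
      apply he2 q hqp hqnep
      exact ⟨k, nsmul_zsmul_mix _ _ _ _ (by rw [hmm']; exact ha)⟩
    have ha2 : e ((u * ((q ^ k : ℕ) : ℤ)) • a) = 0 := by
      apply IH m' hlt (hcop.coprime_dvd_right ⟨q ^ k, by rw [mul_comm, hmm']⟩)
      exact nsmul_zsmul_mix _ _ _ _ (by rw [mul_comm, hmm']; exact ha)
    calc e a = e ((v * m') • a + (u * ((q ^ k : ℕ) : ℤ)) • a) := by rw [← split_bezout huv a]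
    _ = e ((v * m') • a) + e ((u * ((q ^ k : ℕ) : ℤ)) • a) := map_add e _ _
    _ = 0 := by rw [ha1, ha2, add_zero]

/-- The basic property of `e` : it is the projection onto the `p`-component. -/
lemma e_spec (hA : AddMonoid.IsTorsion A) (hp : p.Prime)
    (he1 : ∀ a ∈ pComponent A p, e a = a)
    (he2 : ∀ q : ℕ, q.Prime → q ≠ p → ∀ a ∈ pComponent A q, e a = 0) (a : A) :
    e a ∈ pComponent A p ∧ ∃ m : ℕ, m ≠ 0 ∧ Nat.Coprime p m ∧ m • (a - e a) = 0 := by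
  obtain ⟨b, c, rfl, hb, m, hm0, hmc, hmc0⟩ := decomp hA hp a
  have hc : e c = 0 := e_kills e hp he2 m hmc c hmc0
  have heb : e (b + c) = b := by rw [map_add, he1 b hb, hc, add_zero]
  rw [heb]
  exact ⟨hb, m, hm0, hmc, by rw [add_sub_cancel_left]; exact hmc0⟩

end Part2

section Ortho

variable {A : Type*} [AddCommGroup A] {p : ℕ}

lemma ortho_aux (π₁ π₂ : AddMonoid.End A) (h₁ : π₁ * π₁ = π₁)
    (c₁ : ∀ f : AddMonoid.End A, π₁ * f = f * π₁) (h₁₂ : π₁ * π₂ = 0)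
    (ψ : (AddMonoidHom.range (π₁ : A →+ A)) →+ (AddMonoidHom.range (π₂ : A →+ A))) :
    ψ = 0 := by
  set f : AddMonoid.End A :=
    ((π₂ : A →+ A).range.subtype).comp (ψ.comp (π₁ : A →+ A).rangeRestrict) with hf
  have hc := c₁ f
  have key : ∀ a : A, ((ψ ((π₁ : A →+ A).rangeRestrict a)) : A) = 0 := by
    intro a
    have h1 : (π₁ * f) a = 0 := by
      show π₁ (((ψ ((π₁ : A →+ A).rangeRestrict a)) : A)) = 0
      obtain ⟨t, ht⟩ := AddMonoidHom.mem_range.mp (ψ ((π₁ : A →+ A).rangeRestrict a)).2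
      rw [← ht]
      show (π₁ * π₂) t = 0
      rw [h₁₂]
      rfl
    have h2 : (f * π₁) a = ((ψ ((π₁ : A →+ A).rangeRestrict a)) : A) := by
      show ((ψ ((π₁ : A →+ A).rangeRestrict (π₁ a))) : A) = _
      have hrr : (π₁ : A →+ A).rangeRestrict (π₁ a) = (π₁ : A →+ A).rangeRestrict a := by
        apply Subtype.ext
        show π₁ (π₁ a) = π₁ a
        exact DFunLike.congr_fun h₁ a
      rw [hrr]
    rw [← h2, ← hc]
    exact h1
  ext x
  obtain ⟨a, ha⟩ := AddMonoidHom.mem_range.mp x.2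
  have hx : (π₁ : A →+ A).rangeRestrict a = x := Subtype.ext ha
  have hk := key a
  rw [hx] at hk
  rw [AddMonoidHom.zero_apply]
  simpa using hk

lemma ortho (hp : p.Prime) (π₁ π₂ : AddMonoid.End A)
    (h₁ : π₁ * π₁ = π₁) (c₁ : ∀ f : AddMonoid.End A, π₁ * f = f * π₁)
    (h₂ : π₂ * π₂ = π₂) (c₂ : ∀ f : AddMonoid.End A, π₂ * f = f * π₂)
    (h₁₂ : π₁ * π₂ = 0) (h₂₁ : π₂ * π₁ = 0)
    (n₁ : ∃ a, π₁ a ≠ 0) (n₂ : ∃ a, π₂ a ≠ 0)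
    (t₁ : ∀ a : A, ∃ k : ℕ, p ^ k • π₁ a = 0)
    (t₂ : ∀ a : A, ∃ k : ℕ, p ^ k • π₂ a = 0) : False := by
  have hMne : ∃ m : (AddMonoidHom.range (π₁ : A →+ A)), m ≠ 0 := by
    obtain ⟨a, ha⟩ := n₁
    refine ⟨⟨π₁ a, AddMonoidHom.mem_range.mpr ⟨a, rfl⟩⟩, fun h => ha ?_⟩
    simpa using congrArg Subtype.val h
  have hNne : ∃ m : (AddMonoidHom.range (π₂ : A →+ A)), m ≠ 0 := by
    obtain ⟨a, ha⟩ := n₂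
    refine ⟨⟨π₂ a, AddMonoidHom.mem_range.mpr ⟨a, rfl⟩⟩, fun h => ha ?_⟩
    simpa using congrArg Subtype.val h
  have hMt : ∀ m : (AddMonoidHom.range (π₁ : A →+ A)), ∃ k : ℕ, p ^ k • m = 0 := by
    intro m
    obtain ⟨a, ha⟩ := AddMonoidHom.mem_range.mp m.2
    obtain ⟨k, hk⟩ := t₁ a
    refine ⟨k, Subtype.ext ?_⟩
    show p ^ k • (m : A) = 0
    rw [← ha]
    exact hk
  have hNt : ∀ m : (AddMonoidHom.range (π₂ : A →+ A)), ∃ k : ℕ, p ^ k • m = 0 := by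
    intro m
    obtain ⟨a, ha⟩ := AddMonoidHom.mem_range.mp m.2
    obtain ⟨k, hk⟩ := t₂ a
    refine ⟨k, Subtype.ext ?_⟩
    show p ^ k • (m : A) = 0
    rw [← ha]
    exact hk
  rcases homkey hp hMne hNne hMt hNt with ⟨ψ, hψ⟩ | ⟨ψ, hψ⟩
  · exact hψ (ortho_aux π₁ π₂ h₁ c₁ h₁₂ ψ)
  · exact hψ (ortho_aux π₂ π₁ h₂ c₂ h₂₁ ψ)

end Ortho


/-- For a periodic abelian group `A` and a prime `p` with `A_p ≠ 0`,
the projection `e_p` onto `A_p` along the other components is the unique `x ∈ End A`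
such that: (1) `x` is a nonzero central idempotent; (2) `x` is not a sum of two nonzero
orthogonal central idempotents; (3) there is no `y ∈ End A` with `y ∘ (p·x) = x`. -/
theorem proj_p_unique_characterization
    (A : Type*) [AddCommGroup A] (hA : AddMonoid.IsTorsion A)
    (p : ℕ) (hp : p.Prime) (hAp : pComponent A p ≠ ⊥)
    (e : AddMonoid.End A)
    (he : (∀ a ∈ pComponent A p, e a = a) ∧
          (∀ q : ℕ, q.Prime → q ≠ p → ∀ a ∈ pComponent A q, e a = 0)) :
    ∀ x : AddMonoid.End A,
      (x ≠ 0 ∧ (x * x = x ∧ ∀ f : AddMonoid.End A, x * f = f * x) ∧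
        (¬ ∃ e₁ e₂ : AddMonoid.End A, e₁ ≠ 0 ∧ e₂ ≠ 0 ∧
          (e₁ * e₁ = e₁ ∧ ∀ f : AddMonoid.End A, e₁ * f = f * e₁) ∧
          (e₂ * e₂ = e₂ ∧ ∀ f : AddMonoid.End A, e₂ * f = f * e₂) ∧
          e₁ * e₂ = 0 ∧ e₂ * e₁ = 0 ∧ x = e₁ + e₂) ∧
        (¬ ∃ y : AddMonoid.End A, y * (p • x) = x)) ↔ x = e := by
  obtain ⟨he1, he2⟩ := he
  have spec := fun a : A => e_spec e hA hp he1 he2 a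
  have hkill := e_kills e hp he2
  have pe : ∀ a : A, e (e a) = e a := fun a => he1 (e a) (spec a).1
  have heid : e * e = e := AddMonoidHom.ext pe
  have hsplit : ∀ a : A, e a + (a - e a) = a := fun a => by abel
  -- `e` is central
  have hectr : ∀ f : AddMonoid.End A, e * f = f * e := by
    intro f
    apply AddMonoidHom.ext
    intro a
    show e (f a) = f (e a)
    have hfe : e (f (e a)) = f (e a) := by
      apply he1
      obtain ⟨n, hn⟩ := (spec a).1
      exact ⟨n, by rw [← map_nsmul, hn, map_zero]⟩
    have hfc : e (f (a - e a)) = 0 := by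
      obtain ⟨m, hm0, hmc, hms⟩ := (spec a).2
      exact hkill m hmc _ (by rw [← map_nsmul, hms, map_zero])
    calc e (f a) = e (f (e a + (a - e a))) := by rw [hsplit]
    _ = e (f (e a)) + e (f (a - e a)) := by rw [map_add, map_add]
    _ = f (e a) := by rw [hfe, hfc, add_zero]
  have hApne : ∃ a : A, a ∈ pComponent A p ∧ a ≠ 0 := by
    by_contra h
    push_neg at h
    apply hAp
    rw [AddSubgroup.eq_bot_iff_forall]
    exact h
  intro x
  constructor
  · rintro ⟨hx0, ⟨hxid, hxc⟩, hx2, hx3⟩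
    have hxe : x * e = e * x := hxc e
    have A2 : ∀ f : AddMonoid.End A, (x * e) * f = f * (x * e) := fun f => by
      rw [mul_assoc, hectr f, ← mul_assoc, hxc f, mul_assoc]
    have hxex : (x * e) * x = x * e := by
      rw [mul_assoc, ← hxe, ← mul_assoc, hxid]
    have A1 : (x * e) * (x * e) = x * e := by
      rw [← mul_assoc, hxex, mul_assoc, heid]
    by_cases h2z : x - x * e = 0
    · -- `x` is supported on the `p`-component; conclude `x = e`.
      have hxe' : x * e = x := (sub_eq_zero.mp h2z).symm
      by_contra hne
      have hex' : e * x = x := by rw [← hxe, hxe']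
      have t₁ : ∀ a : A, x a ∈ pComponent A p := by
        intro a
        have hxa : x a = x (e a) := (DFunLike.congr_fun hxe' a).symm
        obtain ⟨n, hn⟩ := (spec a).1
        exact ⟨n, by rw [hxa, ← map_nsmul, hn, map_zero]⟩
      have t₂ : ∀ a : A, (e - x) a ∈ pComponent A p := by
        intro a
        have : (e - x) a = e a - x a := rfl
        rw [this]
        exact sub_mem (spec a).1 (t₁ a)
      apply ortho hp x (e - x) hxid hxc
      · rw [sub_mul, mul_sub, mul_sub, heid, hex', hxe', hxid, sub_self, sub_zero]
      · intro f
        rw [sub_mul, mul_sub, hectr f, hxc f]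
      · rw [mul_sub, hxe', hxid, sub_self]
      · rw [sub_mul, hex', hxid, sub_self]
      · obtain ⟨a, ha⟩ := DFunLike.ne_iff.mp hx0
        exact ⟨a, by simpa using ha⟩
      · obtain ⟨a, ha⟩ := DFunLike.ne_iff.mp hne
        refine ⟨a, ?_⟩
        show e a - x a ≠ 0
        exact sub_ne_zero_of_ne (Ne.symm ha)
      · exact fun a => t₁ a
      · exact fun a => t₂ a
    · by_cases h1z : x * e = 0
      · -- `x` is supported on the coprime part: contradict (3).
        exfalso
        apply hx3
        have hxe0 : ∀ b : A, x (e b) = 0 := fun b => by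
          simpa using DFunLike.congr_fun h1z b
        have hxcop : ∀ a : A, ∃ m : ℕ, m ≠ 0 ∧ Nat.Coprime p m ∧ m • x a = 0 := by
          intro a
          obtain ⟨m, hm0, hmc, hms⟩ := (spec a).2
          refine ⟨m, hm0, hmc, ?_⟩
          have h1 : x a = x (a - e a) := by
            calc x a = x (e a + (a - e a)) := by rw [hsplit]
            _ = x (e a) + x (a - e a) := by rw [map_add]
            _ = x (a - e a) := by rw [hxe0, zero_add]
          rw [h1, ← map_nsmul, hms, map_zero]
        have uniq : ∀ c c' : A, (∃ m : ℕ, m ≠ 0 ∧ Nat.Coprime p m ∧ m • c = 0) →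
            (∃ m : ℕ, m ≠ 0 ∧ Nat.Coprime p m ∧ m • c' = 0) → p • c = p • c' → c = c' := by
          rintro c c' ⟨m, hm0, hmc, hms⟩ ⟨m', hm0', hmc', hms'⟩ hpc
          have hd : p • (c - c') = 0 := by rw [smul_sub, hpc, sub_self]
          have hdt : (m * m') • (c - c') = 0 := by
            have h1 : (m * m') • c = 0 := by rw [mul_comm, mul_smul, hms, smul_zero]
            have h2 : (m * m') • c' = 0 := by rw [mul_smul, hms', smul_zero]
            rw [smul_sub, h1, h2, sub_zero]
          obtain ⟨u, v, huv⟩ := bezout_of_coprime' (Nat.Coprime.mul_right hmc hmc')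
          have hsb := split_bezout huv (c - c')
          have hterm1 : (v * ((m * m' : ℕ) : ℤ)) • (c - c') = 0 := by
            rw [mul_smul, natCast_zsmul, hdt, smul_zero]
          have hterm2 : (u * (p : ℤ)) • (c - c') = 0 := by
            rw [mul_smul, natCast_zsmul, hd, smul_zero]
          rw [hterm1, hterm2, add_zero] at hsb
          exact sub_eq_zero.mp hsb
        have exX : ∀ a : A, (∃ m : ℕ, m ≠ 0 ∧ Nat.Coprime p m ∧ m • a = 0) →
            ∃ c, (∃ m : ℕ, m ≠ 0 ∧ Nat.Coprime p m ∧ m • c = 0) ∧ p • c = a := by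
          rintro a ⟨m, hm0, hmc, hms⟩
          obtain ⟨u, v, huv⟩ := bezout_of_coprime' hmc
          refine ⟨u • a, ⟨m, hm0, hmc, ?_⟩, ?_⟩
          · rw [← natCast_zsmul, ← mul_smul, mul_comm, mul_smul, natCast_zsmul, hms, smul_zero]
          · rw [← natCast_zsmul, ← mul_smul,
              show (p : ℤ) * u = 1 - v * (m : ℤ) by linarith,
              sub_smul, one_smul, mul_smul, natCast_zsmul, hms, smul_zero, sub_zero]
        have hzex : ∀ a : A, ∃ c, (∃ m : ℕ, m ≠ 0 ∧ Nat.Coprime p m ∧ m • c = 0) ∧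
            p • c = a - e a := fun a => exX _ (spec a).2
        choose z hz1 hz2 using hzex
        have hzadd : ∀ a b : A, z (a + b) = z a + z b := by
          intro a b
          apply uniq _ _ (hz1 _)
          · obtain ⟨m, hm0, hmc, hms⟩ := hz1 a
            obtain ⟨m', hm0', hmc', hms'⟩ := hz1 b
            refine ⟨m * m', mul_ne_zero hm0 hm0', Nat.Coprime.mul_right hmc hmc', ?_⟩
            have h1 : (m * m') • z a = 0 := by rw [mul_comm, mul_smul, hms, smul_zero]
            have h2 : (m * m') • z b = 0 := by rw [mul_smul, hms', smul_zero]
            rw [smul_add, h1, h2, add_zero]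
          · rw [hz2, smul_add, hz2, hz2, map_add]
            abel
        refine ⟨AddMonoidHom.mk' z hzadd, ?_⟩
        apply AddMonoidHom.ext
        intro a
        show z ((p • x) a) = x a
        have hsm : (p • x) a = p • x a := rfl
        rw [hsm]
        obtain ⟨m, hm0, hmc, hms⟩ := hxcop a
        apply uniq _ _ (hz1 _) ⟨m, hm0, hmc, hms⟩
        rw [hz2]
        have hz3 : e (p • x a) = 0 := by
          rw [map_nsmul, hkill m hmc _ hms, smul_zero]
        rw [hz3, sub_zero]
      · -- both pieces nonzero: contradict (2).
        exfalso
        apply hx2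
        refine ⟨x * e, x - x * e, h1z, h2z, ⟨A1, A2⟩, ⟨?_, ?_⟩, ?_, ?_, by abel⟩
        · rw [sub_mul, mul_sub, mul_sub, hxid, ← mul_assoc, hxid, hxex, A1,
            sub_self, sub_zero]
        · intro f
          rw [sub_mul, mul_sub, hxc f, A2 f]
        · rw [mul_sub, hxex, A1, sub_self]
        · rw [sub_mul, ← mul_assoc, hxid, A1, sub_self]
  · rintro rfl
    refine ⟨?_, ⟨heid, hectr⟩, ?_, ?_⟩
    · obtain ⟨a, haP, ha0⟩ := hApne
      intro h
      apply ha0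
      have h1 := he1 a haP
      rw [h] at h1
      simpa using h1.symm
    · rintro ⟨e₁, e₂, h10, h20, ⟨h1i, h1c⟩, ⟨h2i, h2c⟩, h12, h21, hsum⟩
      have he1e : e₁ * x = e₁ := by rw [hsum, mul_add, h1i, h12, add_zero]
      have he2e : e₂ * x = e₂ := by rw [hsum, mul_add, h21, h2i, zero_add]
      apply ortho hp e₁ e₂ h1i h1c h2i h2c h12 h21
      · obtain ⟨a, ha⟩ := DFunLike.ne_iff.mp h10
        exact ⟨a, by simpa using ha⟩
      · obtain ⟨a, ha⟩ := DFunLike.ne_iff.mp h20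
        exact ⟨a, by simpa using ha⟩
      · intro a
        have h' : e₁ (x a) = e₁ a := DFunLike.congr_fun he1e a
        obtain ⟨n, hn⟩ := (spec a).1
        exact ⟨n, by rw [← h', ← map_nsmul, hn, map_zero]⟩
      · intro a
        have h' : e₂ (x a) = e₂ a := DFunLike.congr_fun he2e a
        obtain ⟨n, hn⟩ := (spec a).1
        exact ⟨n, by rw [← h', ← map_nsmul, hn, map_zero]⟩
    · rintro ⟨y, hy⟩
      obtain ⟨a, haP, ha0⟩ := hApne
      obtain ⟨m₀, hm₀, hpm₀⟩ := exists_order_p a ha0 haP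
      have hm₀P : m₀ ∈ pComponent A p := ⟨1, by rw [pow_one]; exact hpm₀⟩
      have h1 := DFunLike.congr_fun hy m₀
      have h2 : (y * (p • x)) m₀ = y (p • x m₀) := rfl
      rw [h2, he1 m₀ hm₀P, hpm₀, map_zero] at h1
      exact hm₀ h1.symm
end

section
/- For every prime p there exists a first-order formula Φ_p(x) in the language of rings, with one free variable and no parameters, such that for every periodic abelian group A and every f ∈ End A, the formula Φ_p(f) holds in End A if and only if f ∘ e_p = f (equivalently, f vanishes on every q-component with q ≠ p). In particular, the subring {f ∈ End A : f ∘ e_p = f}, which is canonically isomorphic to End A_p, is definable without parameters in End A, uniformly in A. -/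
open FirstOrder

attribute [local instance] FirstOrder.Ring.compatibleRingOfRing

/-!
For an endomorphism `g` of a torsion group `A`, the ring-theoretic condition `g ∈ p · End A · g`
says exactly that `g` takes values in the prime-to-`p` part `A_{p'}`. If `g = p h g`, every value
`b` of `g` satisfies `b = p h b`, and iterating this kills the `p`-part of `b`. Conversely the
projection `e` of `A = A_p ⊕ A_{p'}` onto `A_{p'}` satisfies `e = p h e`, where `h` is `e`
followed by the inverse of multiplication by `p`, which is bijective on `A_{p'}`. Hence
`Φ_p(f) := ∀ g h, g = p h g → f g = 0` says that `f` vanishes on `A_{p'}`, the sum of the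
`q`-components for `q ≠ p`.
-/

open Language

def coprimeComponent (A : Type*) [AddCommGroup A] (p : ℕ) : AddSubgroup A where
  carrier := {a | ∃ n : ℕ, n.Coprime p ∧ n • a = 0}
  zero_mem' := ⟨1, Nat.coprime_one_left p, smul_zero 1⟩
  add_mem' := by
    rintro a b ⟨n, hn, hna⟩ ⟨m, hm, hmb⟩
    refine ⟨n * m, hn.mul_left hm, ?_⟩
    rw [smul_add, mul_nsmul, hna, smul_zero, mul_comm, mul_nsmul, hmb, smul_zero, add_zero]
  neg_mem' := by
    rintro a ⟨n, hn, hna⟩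
    exact ⟨n, hn, by rw [smul_neg, hna, neg_zero]⟩

section TorsionGroups

variable {A : Type*} [AddCommGroup A] {p : ℕ}

theorem eq_zero_of_coprime_of_nsmul_eq_zero {r s : ℕ} (hrs : r.Coprime s) {a : A}
    (hr : r • a = 0) (hs : s • a = 0) : a = 0 :=
  AddMonoid.addOrderOf_eq_one_iff.mp <|
    (hrs.coprime_dvd_left (addOrderOf_dvd_of_nsmul_eq_zero hr)).eq_one_of_dvd
      (addOrderOf_dvd_of_nsmul_eq_zero hs)

theorem exists_add_eq_of_coprime {r s : ℕ} (hrs : r.Coprime s) {a : A}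
    (ha : (r * s) • a = 0) : ∃ x y : A, r • x = 0 ∧ s • y = 0 ∧ x + y = a := by
  obtain ⟨u, v, huv⟩ := hrs.isCoprime
  have ha' : ((r * s : ℕ) : ℤ) • a = 0 := by rw [natCast_zsmul, ha]
  refine ⟨(v * s) • a, (u * r) • a, ?_, ?_, ?_⟩
  · rw [← natCast_zsmul, smul_smul, show (r : ℤ) * (v * s) = v * ((r * s : ℕ) : ℤ) by
      push_cast; ring, mul_zsmul, ha', smul_zero]
  · rw [← natCast_zsmul, smul_smul, show (s : ℤ) * (u * r) = u * ((r * s : ℕ) : ℤ) by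
      push_cast; ring, mul_zsmul, ha', smul_zero]
  · rw [← add_zsmul, add_comm, huv, one_zsmul]

theorem exists_pow_mul_nsmul_eq_zero (hp : p.Prime) {a : A} (ha : IsOfFinAddOrder a) :
    ∃ k m : ℕ, m.Coprime p ∧ (p ^ k * m) • a = 0 :=
  ⟨_, _, (Nat.coprime_ordCompl hp ha.addOrderOf_pos.ne').symm, by
    rw [Nat.ordProj_mul_ordCompl_eq_self, addOrderOf_nsmul_eq_zero]⟩

theorem pComponent_le_coprimeComponent {q : ℕ} (hqp : q.Coprime p) :
    pComponent A q ≤ coprimeComponent A p :=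
  fun _ ⟨k, hk⟩ => ⟨q ^ k, hqp.pow_left k, hk⟩

theorem isCompl_coprimeComponent_pComponent (hp : p.Prime) (hA : IsAddTorsion A) :
    IsCompl (coprimeComponent A p) (pComponent A p) := by
  constructor
  · rw [AddSubgroup.disjoint_def]
    rintro a ⟨n, hn, hna⟩ ⟨k, hk⟩
    exact eq_zero_of_coprime_of_nsmul_eq_zero (hn.pow_right k) hna hk
  · refine codisjoint_iff.mpr (eq_top_iff.mpr fun a _ => ?_)
    obtain ⟨k, m, hm, ha⟩ := exists_pow_mul_nsmul_eq_zero hp (hA a)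
    obtain ⟨x, y, hx, hy, rfl⟩ := exists_add_eq_of_coprime (hm.symm.pow_left k) ha
    rw [add_comm]
    exact AddSubgroup.add_mem_sup ⟨m, hm, hy⟩ ⟨k, hx⟩

variable (p) in
theorem bijective_nsmul_coprimeComponent :
    Function.Bijective (nsmulAddMonoidHom p : coprimeComponent A p →+ coprimeComponent A p) := by
  constructor
  · rw [injective_iff_map_eq_zero]
    rintro ⟨z, n, hn, hnz⟩ hpz
    exact Subtype.ext (eq_zero_of_coprime_of_nsmul_eq_zero hn hnz (congrArg Subtype.val hpz))
  · rintro ⟨y, hy⟩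
    obtain ⟨n, hn, hny⟩ := id hy
    obtain ⟨u, v, huv⟩ := hn.symm.isCoprime
    refine ⟨⟨u • y, zsmul_mem hy u⟩, Subtype.ext ?_⟩
    calc p • u • y = (u * p) • y + v • (n : ℤ) • y := by
          rw [natCast_zsmul, hny, smul_zero, add_zero, ← natCast_zsmul, smul_smul, mul_comm]
      _ = y := by rw [smul_smul, ← add_zsmul, huv, one_zsmul]

theorem exists_eq_nsmul_mul_of_isCompl {Q P : AddSubgroup A}
    (hQP : IsCompl Q P) {n : ℕ} (hn : Function.Bijective (nsmulAddMonoidHom n : Q →+ Q)) :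
    ∃ e h : AddMonoid.End A, (∀ a ∈ Q, e a = a) ∧ e = n • (h * e) := by
  have hQP' : IsCompl Q.toIntSubmodule P.toIntSubmodule :=
    AddSubgroup.toIntSubmodule.isCompl_iff.mp hQP
  let π : A →+ Q := (Q.toIntSubmodule.projectionOnto _ hQP').toAddMonoidHom
  have hπ (a : A) (ha : a ∈ Q) : π a = ⟨a, ha⟩ :=
    Submodule.projectionOnto_apply_of_mem_left hQP' ha
  let δ : Q ≃+ Q := AddEquiv.ofBijective _ hn
  let e : AddMonoid.End A := Q.subtype.comp π
  let h : AddMonoid.End A := Q.subtype.comp (δ.symm.toAddMonoidHom.comp π)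
  refine ⟨e, h, fun a ha => congrArg Subtype.val (hπ a ha), AddMonoidHom.ext fun a => ?_⟩
  change (π a : A) = n • (δ.symm (π (π a)) : A)
  rw [hπ _ (π a).2]
  exact (congrArg Subtype.val (δ.apply_symm_apply (π a))).symm

theorem eq_zero_of_eq_nsmul_apply (h : AddMonoid.End A) {n k : ℕ} {x : A} (hk : n ^ k • x = 0)
    (hx : x = n • h x) : x = 0 := by
  induction k generalizing x with
  | zero => simpa using hk
  | succ k ih =>
    have hnx : n • x = 0 := ih (by rw [← mul_nsmul, ← pow_succ', hk]) (by rw [map_nsmul, ← hx])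
    rw [hx, ← map_nsmul, hnx, map_zero]

theorem mem_coprimeComponent_of_eq_nsmul_apply (hp : p.Prime) (hA : IsAddTorsion A)
    (h : AddMonoid.End A) {b : A} (hb : b = p • h b) : b ∈ coprimeComponent A p := by
  obtain ⟨k, m, hm, hkm⟩ := exists_pow_mul_nsmul_eq_zero hp (hA b)
  refine ⟨m, hm, eq_zero_of_eq_nsmul_apply h (n := p) (k := k) ?_ ?_⟩
  · rw [← mul_nsmul', hkm]
  · rw [map_nsmul, smul_comm, ← hb]

theorem mem_of_nsmul_eq_zero_of_pComponent_le {S : AddSubgroup A} {n : ℕ} (hn : n ≠ 0)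
    (hS : ∀ q, q.Prime → q ∣ n → pComponent A q ≤ S) {a : A} (ha : n • a = 0) : a ∈ S := by
  induction n using Nat.recOnPosPrimePosCoprime generalizing a with
  | prime_pow q k hq hk => exact hS q hq (dvd_pow_self q hk.ne') ⟨k, ha⟩
  | zero => exact absurd rfl hn
  | one => rw [one_nsmul] at ha; exact ha ▸ zero_mem S
  | coprime r s hr hs hrs ihr ihs =>
    obtain ⟨x, y, hx, hy, rfl⟩ := exists_add_eq_of_coprime hrs ha
    exact add_mem (ihr (by omega) (fun q hq hqr => hS q hq (hqr.mul_right s)) hx)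
      (ihs (by omega) (fun q hq hqs => hS q hq (hqs.mul_left r)) hy)

theorem map_eq_zero_of_mem_coprimeComponent {B : Type*} [AddZeroClass B] (hp : p ≠ 1)
    (f : A →+ B) (hf : ∀ q : ℕ, q.Prime → q ≠ p → ∀ a ∈ pComponent A q, f a = 0) {a : A}
    (ha : a ∈ coprimeComponent A p) : f a = 0 := by
  obtain ⟨n, hn, hna⟩ := ha
  refine mem_of_nsmul_eq_zero_of_pComponent_le (S := f.ker) ?_
    (fun q hq hqn b hb => hf q hq ?_ b hb) hna
  · rintro rfl
    exact hp (Nat.coprime_zero_left p |>.mp hn)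
  · rintro rfl
    exact hq.ne_one (Nat.coprime_self q |>.mp (hn.coprime_dvd_left hqn))

theorem forall_mul_eq_zero_iff_forall_pComponent (hp : p.Prime) (hA : IsAddTorsion A)
    (f : AddMonoid.End A) :
    (∀ g h : AddMonoid.End A, g = p • (h * g) → f * g = 0) ↔
      ∀ q : ℕ, q.Prime → q ≠ p → ∀ a ∈ pComponent A q, f a = 0 := by
  refine ⟨fun hf q hq hqp a ha => ?_, fun hf g h hg => AddMonoidHom.ext fun a => ?_⟩
  · obtain ⟨e, h, he, heh⟩ := exists_eq_nsmul_mul_of_isCompl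
      (isCompl_coprimeComponent_pComponent hp hA) (bijective_nsmul_coprimeComponent p)
    rw [← he a (pComponent_le_coprimeComponent ((Nat.coprime_primes hq hp).mpr hqp) ha)]
    exact DFunLike.congr_fun (hf e h heh) a
  · exact map_eq_zero_of_mem_coprimeComponent hp.ne_one f hf
      (mem_coprimeComponent_of_eq_nsmul_apply hp hA h (DFunLike.congr_fun hg a))

end TorsionGroups

def nsmulTerm {α : Type*} : ℕ → Language.ring.Term α → Language.ring.Term α
  | 0, _ => 0
  | n + 1, t => nsmulTerm n t + t

@[simp]
theorem realize_nsmulTerm {α R : Type*} [Ring R] [Ring.CompatibleRing R] (n : ℕ)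
    (t : Language.ring.Term α) (v : α → R) : (nsmulTerm n t).realize v = n • t.realize v := by
  induction n with
  | zero => simp [nsmulTerm]
  | succ n ih => rw [nsmulTerm, Ring.realize_add, ih, succ_nsmul]

def pComponentFormula (p : ℕ) : Language.ring.Formula (Fin 1) :=
  ∀' ∀' ((&0 =' nsmulTerm p (&1 * &0)) ⟹ ((Term.var (Sum.inl 0) * &0) =' 0))

theorem realize_pComponentFormula {R : Type*} [Ring R] [Ring.CompatibleRing R] (p : ℕ) (f : R) :
    (pComponentFormula p).Realize (fun _ => f) ↔ ∀ g h : R, g = p • (h * g) → f * g = 0 := by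
  simp [pComponentFormula, Formula.Realize, Fin.snoc]

/-- For every prime `p` there is a parameter-free first-order ring
formula `Φ_p(x)` in one free variable such that for every periodic abelian group `A` and
every `f ∈ End A`, `Φ_p(f)` holds in `End A` if and only if `f ∘ e_p = f`, i.e. `f`
vanishes on every `q`-component with `q ≠ p`.  In particular the subring of `End A`
canonically isomorphic to `End A_p` is definable without parameters, uniformly in `A`. -/
theorem exists_formula_defining_pComponent_endomorphisms
    (p : ℕ) (hp : p.Prime) :
    ∃ φ : Language.ring.Formula (Fin 1),
      ∀ (A : Type) [AddCommGroup A], AddMonoid.IsTorsion A →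
        ∀ f : AddMonoid.End A,
          (φ.Realize (fun _ => f) ↔
            ∀ q : ℕ, q.Prime → q ≠ p → ∀ a ∈ pComponent A q, f a = 0) := by
  refine ⟨pComponentFormula p, fun A _ hA f => ?_⟩
  rw [realize_pComponentFormula]
  exact forall_mul_eq_zero_iff_forall_pComponent hp hA f
end
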